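/- arXiv:2407.14384 — 3 statements merged into one kernel-verified Lean document; each statement's English description precedes it below -/
import Mathlib

section
/- For every two-counter automaton M: chase(D_grid, R_grid) ⊨ Q_M if and only if M halts when started from the configuration (q0, 0, 0). -/
set_option maxHeartbeats 1000000

noncomputable section

open Classical

/-! ### Basic syntax: predicates, atoms, rules, databases, instances -/

/-- An abstract atom: a predicate identifier together with a list of
argument identifiers (variables in rules/queries, constants in databases). -/
abbrev PAtom : Type := ℕ × List ℕ

/-- An existential rule `∀x∀y (α(x,y) → ∃z β(y,z))`, given by a body
(a finite conjunction/list of atoms over variables) and a single head atom.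
Head variables not occurring in the body are (implicitly) existentially
quantified. -/
abbrev ERule : Type := List PAtom × PAtom

/-- A ruleset is a finite set (list) of existential rules. -/
abbrev Ruleset : Type := List ERule

/-- A database is a finite set (list) of facts, i.e. atoms over constants. -/
abbrev Database : Type := List PAtom

/-- Terms: constants, (labelled) nulls, and functional (Skolem) terms. -/
inductive GTerm : Type where
  | const : ℕ → GTerm
  | null : ℕ → GTerm
  | func : ℕ → List GTerm → GTerm

instance : DecidableEq GTerm := Classical.decEq _

/-- A (ground) atom of an instance: a predicate with a list of terms. -/
structure GAtom : Type where
  pred : ℕ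
  args : List GTerm

/-- An instance is a (possibly infinite) set of atoms (it is automatically
countable, as `GAtom` is a countable type). -/
abbrev Inst : Type := Set GAtom

/-- Applying a variable assignment to an abstract atom. -/
def substAtom (h : ℕ → GTerm) (a : PAtom) : GAtom := ⟨a.1, a.2.map h⟩

/-- The list of all variable occurrences in the body of a rule. -/
def bodyVarList (ρ : ERule) : List ℕ := ρ.1.foldr (fun a r => a.2 ++ r) []

/-- The variables of the head of a rule. -/
def headVars (ρ : ERule) : List ℕ := ρ.2.2

/-- A join variable: a variable occurring more than once in the body. -/
def isJoinVar (ρ : ERule) (v : ℕ) : Prop := 1 < (bodyVarList ρ).count v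

/-- The frontier of a rule: variables shared between body and head. -/
def frontierVars (ρ : ERule) : Set ℕ := {v | v ∈ bodyVarList ρ ∧ v ∈ headVars ρ}

/-- Existential variables of a rule: head variables not occurring in the body. -/
def existVars (ρ : ERule) : Set ℕ := {v | v ∈ headVars ρ ∧ v ∉ bodyVarList ρ}

/-- Satisfaction of an existential rule by an instance: every homomorphic
match of the body extends to a match of the head. -/
def satRule (I : Inst) (ρ : ERule) : Prop :=
  ∀ h : ℕ → GTerm, (∀ a ∈ ρ.1, substAtom h a ∈ I) →
    ∃ g : ℕ → GTerm, (∀ v ∈ bodyVarList ρ, g v = h v) ∧ substAtom g ρ.2 ∈ I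

/-- The instance corresponding to a database (constants interpreted as constants). -/
def dbInst (D : Database) : Inst := {α | ∃ a ∈ D, α = substAtom GTerm.const a}

/-- `I` is a model of the database `D` and the ruleset `R`. -/
def isModelOf (I : Inst) (D : Database) (R : Ruleset) : Prop :=
  dbInst D ⊆ I ∧ ∀ ρ ∈ R, satRule I ρ

/-- The active domain of an instance. -/
def adom (I : Inst) : Set GTerm := {t | ∃ α ∈ I, t ∈ α.args}

/-! ### Paths and regular path queries -/

/-- A directed path from `s` to `t` in the instance `I` whose successive
binary-predicate edge labels spell the word `w`. -/
inductive IPath (I : Inst) : GTerm → List ℕ → GTerm → Prop where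
  | nil (t : GTerm) : IPath I t [] t
  | cons {s t u : GTerm} {p : ℕ} {w : List ℕ} :
      (⟨p, [s, t]⟩ : GAtom) ∈ I → IPath I t w u → IPath I s (p :: w) u

/-- Satisfaction of the Boolean path query `∃x,y. L(x,y)` (with `x ≠ y`,
`L` a word language over binary predicates) by an instance. -/
def satLang (I : Inst) (L : Set (List ℕ)) : Prop :=
  ∃ s t w, s ∈ adom I ∧ t ∈ adom I ∧ IPath I s w t ∧ w ∈ L

/-- Satisfaction of the Boolean RPQ `∃x,y. A(x,y)` given by a regular
expression `A` over binary predicates. -/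
def satRPQ (I : Inst) (A : RegularExpression ℕ) : Prop := satLang I A.matches'

/-- Certain-answer entailment of a Boolean RPQ: every model of `D` and `R`
satisfies the query. -/
def entailsRPQ (D : Database) (R : Ruleset) (A : RegularExpression ℕ) : Prop :=
  ∀ I : Inst, isModelOf I D R → satRPQ I A

/-! ### The Skolem chase (with Skolem symbols determined by the isomorphism
type of the instantiated rule head) -/

/-- The result of applying a trigger `(ρ, h)`: the instantiated head atom,
where each existential variable is replaced by a Skolem term whose function
symbol encodes the isomorphism type of the instantiated head query, applied
to the (distinct) frontier terms. -/
def skolemAtom (ρ : ERule) (h : ℕ → GTerm) : GAtom :=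
  let bv := bodyVarList ρ
  let hargs : List (GTerm ⊕ ℕ) :=
    ρ.2.2.map (fun v => if v ∈ bv then Sum.inl (h v) else Sum.inr v)
  let fts : List GTerm := (hargs.filterMap Sum.getLeft?).dedup
  let evs : List ℕ := (hargs.filterMap Sum.getRight?).dedup
  let pat : ℕ × List (ℕ ⊕ ℕ) :=
    (ρ.2.1, hargs.map (fun x =>
      match x with
      | Sum.inl t => Sum.inl (fts.findIdx (fun u => decide (u = t)))
      | Sum.inr v => Sum.inr (evs.findIdx (fun u => decide (u = v)))))
  ⟨ρ.2.1, ρ.2.2.map (fun v =>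
    if v ∈ bv then h v
    else GTerm.func (Encodable.encode (pat, evs.findIdx (fun u => decide (u = v)))) fts)⟩

/-- One (parallel) chase step: apply all triggers of `R` in `I`. -/
def chaseStep (R : Set ERule) (I : Inst) : Inst :=
  I ∪ {α | ∃ ρ ∈ R, ∃ h : ℕ → GTerm, (∀ a ∈ ρ.1, substAtom h a ∈ I) ∧ α = skolemAtom ρ h}

/-- The finite stages of the Skolem chase. -/
def chaseStage (R : Set ERule) (I : Inst) : ℕ → Inst
  | 0 => I
  | n + 1 => chaseStep R (chaseStage R I n)

/-- The Skolem chase of an instance `I` with a (possibly infinite) set of rules `R`. -/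
def chase (I : Inst) (R : Set ERule) : Inst := ⋃ n, chaseStage R I n

/-- The set of rules of a (finite, syntactic) ruleset. -/
def rsSet (R : Ruleset) : Set ERule := {ρ | ρ ∈ R}

/-! ### Conjunctive queries, UCQs and finite unification sets -/

/-- Satisfaction of a CQ (list of atoms; `free` lists its free variables,
all other variables are existential) under the answer tuple `a`. -/
def satCQ (I : Inst) (atoms : List PAtom) (free : List ℕ) (a : List GTerm) : Prop :=
  ∃ h : ℕ → GTerm, List.Forall₂ (fun v t => h v = t) free a ∧ ∀ β ∈ atoms, substAtom h β ∈ I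

/-- A UCQ: a disjunction (list) of CQs sharing a tuple of free variables. -/
abbrev UCQ : Type := List (List PAtom) × List ℕ

/-- Satisfaction of a UCQ under the answer tuple `a`. -/
def satUCQ (I : Inst) (Q : UCQ) (a : List GTerm) : Prop := ∃ d ∈ Q.1, satCQ I d Q.2 a

/-- `R` is a finite unification set (fus): every UCQ has a UCQ rewriting. -/
def isFUS (R : Ruleset) : Prop :=
  ∀ Q : UCQ, ∃ Q' : UCQ, Q'.2 = Q.2 ∧
    ∀ (D : Database) (a : List ℕ),
      (satUCQ (chase (dbInst D) (rsSet R)) Q (a.map GTerm.const) ↔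
        satUCQ (dbInst D) Q' (a.map GTerm.const))

/-! ### Sticky and stellar rulesets -/

/-- Variable `v` appears at a position of the head of `ρ` marked by `m`. -/
def markedInHead (m : ℕ → Set ℕ) (ρ : ERule) (v : ℕ) : Prop :=
  ∃ i ∈ m ρ.2.1, ρ.2.2[i]? = some v

/-- `m` is a sticky marking for the set of rules `R`: every join variable of a
rule appears at a marked position of its head atom, and every body variable at
a marked position appears at a marked position of the head atom. -/
def stickyMarking (m : ℕ → Set ℕ) (R : Set ERule) : Prop :=
  ∀ ρ ∈ R,
    (∀ v, isJoinVar ρ v → markedInHead m ρ v) ∧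
    (∀ v, ∀ a ∈ ρ.1, (∃ i ∈ m a.1, a.2[i]? = some v) → markedInHead m ρ v)

/-- A (possibly infinite) set of rules is sticky iff it admits a sticky marking. -/
def isStickySet (R : Set ERule) : Prop := ∃ m, stickyMarking m R

/-- A ruleset is sticky iff it admits a sticky marking. -/
def isSticky (R : Ruleset) : Prop := isStickySet (rsSet R)

/-- A stellar rule: at most one join variable, which must be a frontier
(head) variable. -/
def isStellarRule (ρ : ERule) : Prop :=
  (∀ v w, isJoinVar ρ v → isJoinVar ρ w → v = w) ∧
  ∀ v, isJoinVar ρ v → v ∈ headVars ρ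

/-! ### Merging two terms of an instance -/

/-- The map replacing the terms `s` and `t` by `u`. -/
def mergeMap (s t u : GTerm) : GTerm → GTerm := fun v => if v = s ∨ v = t then u else v

/-- `I[s,t ↦ u]`: the instance obtained from `I` by replacing every
occurrence of `s` or `t` by `u`. -/
def mergeInst (I : Inst) (s t u : GTerm) : Inst :=
  (fun α => GAtom.mk α.pred (α.args.map (mergeMap s t u))) '' I

/-! ### Stellar queries and stellar types -/

/-- A stellar query with free variable `y`: `y` is the only join variable and
each atom contains at most one occurrence of `y`. -/
def isSQ (atoms : List PAtom) (y : ℕ) : Prop :=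
  (∀ v, v ≠ y → (atoms.foldr (fun a r => a.2 ++ r) []).count v ≤ 1) ∧
  ∀ a ∈ atoms, a.2.count y ≤ 1

/-- Satisfaction of a stellar query at the term `s`. -/
def satSQ (I : Inst) (atoms : List PAtom) (y : ℕ) (s : GTerm) : Prop :=
  ∃ h : ℕ → GTerm, h y = s ∧ ∀ a ∈ atoms, substAtom h a ∈ I

/-- Two terms have the same stellar type `★(s) = ★(t)` iff they satisfy
exactly the same stellar queries (equivalently, their most specific stellar
queries are equivalent). -/
def sameStellarType (I : Inst) (s t : GTerm) : Prop :=
  ∀ (atoms : List PAtom) (y : ℕ), isSQ atoms y → (satSQ I atoms y s ↔ satSQ I atoms y t)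

/-! ### Regular types -/

/-- The regular type `↑_A(t)` of a term w.r.t. a DFA: all pairs `(q, q')` such
that `t` has an outgoing path labelled by some word `w` with `δ*(q, w) = q'`. -/
def regType {σ : Type} (I : Inst) (dfa : DFA ℕ σ) (t : GTerm) : Set (σ × σ) :=
  {p | ∃ w u, IPath I t w u ∧ dfa.evalFrom p.1 w = p.2}

/-! ### Homomorphisms between instances -/

/-- A homomorphism from `I` to `J`: a constant-preserving map on terms
sending every atom of `I` to an atom of `J`. -/
def isHom (h : GTerm → GTerm) (I J : Inst) : Prop :=
  (∀ c, h (GTerm.const c) = GTerm.const c) ∧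
  ∀ α ∈ I, (⟨α.pred, α.args.map h⟩ : GAtom) ∈ J

/-! ### Backward rewriting (à la König et al.) -/

/-- Applying a variable renaming to an abstract atom. -/
def substP (σ : ℕ → ℕ) (a : PAtom) : PAtom := (a.1, a.2.map σ)

/-- The variables of a CQ. -/
def cqVars (Q : List PAtom) : Set ℕ := {v | ∃ a ∈ Q, v ∈ a.2}

/-- The rule `ρ` is backward applicable to the CQ `Q` (with free variables
`Y`) with respect to the variable identification `σ` and the isomorphism `f`
from the head of `ρ` to an atom of `Q|σ`. -/
def backApp (ρ : ERule) (Y : Set ℕ) (Q : List PAtom) (σ f : ℕ → ℕ) : Prop :=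
  (∀ y ∈ Y, σ y = y) ∧
  (∀ v, ∀ y ∈ Y, σ v = y → v = y) ∧
  substP f ρ.2 ∈ Q.map (substP σ) ∧
  (∀ v w, v ∈ headVars ρ → w ∈ headVars ρ → f v = f w → v = w) ∧
  (∀ z ∈ existVars ρ, f z ∉ Y) ∧
  (∀ a ∈ Q.map (substP σ), (∃ z ∈ existVars ρ, f z ∈ a.2) → a = substP f ρ.2)

/-- One backward rewriting step on CQs with free variables `Y`, using a rule
of `R` with a minimal variable identification: the matched atom is replaced
by the rule body (with fresh non-frontier variables). -/
def backStep (R : Set ERule) (Y : Set ℕ) (Q Q' : List PAtom) : Prop :=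
  ∃ ρ ∈ R, ∃ σ f g : ℕ → ℕ,
    backApp ρ Y Q σ f ∧
    (∀ σ' : ℕ → ℕ, (∀ v w, σ' v = σ' w → σ v = σ w) →
      (∃ v w, v ∈ cqVars Q ∧ w ∈ cqVars Q ∧ σ v = σ w ∧ σ' v ≠ σ' w) →
      ¬ backApp ρ Y Q σ' f) ∧
    (∀ v ∈ frontierVars ρ, g v = f v) ∧
    (∀ v w, v ∈ bodyVarList ρ → v ∉ headVars ρ → w ∈ bodyVarList ρ → w ∉ headVars ρ →
      g v = g w → v = w) ∧
    (∀ v, v ∈ bodyVarList ρ → v ∉ headVars ρ →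
      g v ∉ cqVars (Q.map (substP σ)) ∧ g v ∉ Y) ∧
    Q' = (Q.map (substP σ)).filter (fun a => decide (a ≠ substP f ρ.2)) ++ ρ.1.map (substP g)

/-- `rew(R)`: `R` together with all rules obtained from rules of `R` by
rewriting their bodies (with the frontier treated as free variables). -/
def rewSet (R : Set ERule) : Set ERule :=
  R ∪ {ρ' | ∃ ρ ∈ R, ∃ q, Relation.ReflTransGen (backStep R (frontierVars ρ)) ρ.1 q ∧ ρ' = (q, ρ.2)}

/-! ### Frontier terms of chase atoms and quick rulesets -/

/-- `t` is a frontier term of the chase atom `β`: a term of `β` introduced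
during the chase strictly earlier than `β`. -/
def isFrontierTermOf (I : Inst) (R : Set ERule) (β : GAtom) (t : GTerm) : Prop :=
  t ∈ β.args ∧ ∃ i, t ∈ adom (chaseStage R I i) ∧ β ∉ chaseStage R I i

/-- A set of rules is quick: every chase atom whose frontier terms all occur
in the initial instance is already produced by the first chase step. -/
def isQuick (R : Set ERule) : Prop :=
  ∀ (I : Inst) (β : GAtom), β ∈ chase I R →
    (∀ t, isFrontierTermOf I R β t → t ∈ adom I) → β ∈ chaseStage R I 1

/-! ### Cores of rule bodies and the rulesets cr⁺(R), R⁺ -/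

/-- A homomorphism between CQs fixing the variables in `Y` pointwise. -/
def cqHomTo (Y : Set ℕ) (q q' : List PAtom) : Prop :=
  ∃ h : ℕ → ℕ, (∀ y ∈ Y, h y = y) ∧ ∀ a ∈ q, substP h a ∈ q'

/-- `q'` is a core of `q` with the variables of `Y` treated as constants:
a minimal sub-conjunction of `q` into which `q` homomorphically maps. -/
def isCoreOf (Y : Set ℕ) (q' q : List PAtom) : Prop :=
  (∀ a ∈ q', a ∈ q) ∧ cqHomTo Y q q' ∧
  ∀ q'' : List PAtom, (∀ a ∈ q'', a ∈ q') → cqHomTo Y q q'' → ∀ a ∈ q', a ∈ q''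

/-- `ρ'` is (a) `core(ρ)`: same head, body a core of the body of `ρ` with the
frontier variables treated as constants. -/
def isCoreRuleOf (ρ' ρ : ERule) : Prop := ρ'.2 = ρ.2 ∧ isCoreOf (frontierVars ρ) ρ'.1 ρ.1

/-- The rule obtained by substituting all join variables of `ρ` by one and
the same fresh variable. -/
def collapseJoins (ρ : ERule) : ERule :=
  let fv := ((bodyVarList ρ ++ headVars ρ).foldr max 0) + 1
  let c : ℕ → ℕ := fun v => if 1 < (bodyVarList ρ).count v then fv else v
  (ρ.1.map (substP c), substP c ρ.2)

/-- `cr⁺(R)`: the cores of the rules of `rew(R)` (via the core-choosing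
function `C`), augmented, for every non-stellar such rule, with its variant
where all join variables are identified with a single fresh variable. -/
def crPlus (C : ERule → ERule) (R : Set ERule) : Set ERule :=
  (C '' rewSet R) ∪
  {ρ' | ∃ ρ ∈ rewSet R, ¬ isStellarRule (C ρ) ∧ ρ' = collapseJoins (C ρ)}

/-- `R⁺`: `cr⁺(R)` with all rules having two or more join variables removed. -/
def rPlusOf (C : ERule → ERule) (R : Set ERule) : Set ERule :=
  {ρ ∈ crPlus C R | ¬ ∃ v w, isJoinVar ρ v ∧ isJoinVar ρ w ∧ v ≠ w}

/-! ### Two-counter automata, the grid database/ruleset, and the query DFA -/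

/-- A (deterministic, Minsky-style) two-counter automaton. Each state `q`
carries the instruction
`if C == 0 then C += 1; goto qt q else C += d; goto qf q`,
where `C` is counter `x` if `cX q` and counter `y` otherwise, and `d = +1`
if `dPlus q` and `d = -1` otherwise. -/
structure TCA where
  numStates : ℕ
  cX : Fin (numStates + 1) → Bool
  dPlus : Fin (numStates + 1) → Bool
  qt : Fin (numStates + 1) → Fin (numStates + 1)
  qf : Fin (numStates + 1) → Fin (numStates + 1)
  q0 : Fin (numStates + 1)
  qhalt : Fin (numStates + 1)

abbrev TCA.State (M : TCA) : Type := Fin (M.numStates + 1)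

/-- One step of a two-counter automaton on a configuration `(q, x, y)`. -/
def TCA.step (M : TCA) : M.State × ℕ × ℕ → M.State × ℕ × ℕ := fun c =>
  let q := c.1
  let x := c.2.1
  let y := c.2.2
  if M.cX q then
    if x = 0 then (M.qt q, 1, y)
    else (M.qf q, (if M.dPlus q then x + 1 else x - 1), y)
  else
    if y = 0 then (M.qt q, x, 1)
    else (M.qf q, x, (if M.dPlus q then y + 1 else y - 1))

/-- `M` halts when started in state `q0` with both counters zero. -/
def TCA.Halts (M : TCA) : Prop := ∃ k, ((M.step)^[k] (M.q0, 0, 0)).1 = M.qhalt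

/-- The fixed predicate identifiers. -/
def pIncX : ℕ := 0
def pIncY : ℕ := 1
def pDecX : ℕ := 2
def pDecY : ℕ := 3
def pXZero : ℕ := 4
def pYZero : ℕ := 5
def pSucc : ℕ := 6
def pZero : ℕ := 7
def pGridPoint : ℕ := 8
def pXCoord : ℕ := 9
def pYCoord : ℕ := 10

/-- `Σ(C += 1)` for the counter selected by `b` (`true` = counter x). -/
def sIncr (b : Bool) : ℕ := if b then pIncX else pIncY
/-- `Σ(C -= 1)`. -/
def sDecr (b : Bool) : ℕ := if b then pDecX else pDecY
/-- `Σ(C == 0)`. -/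
def sZero (b : Bool) : ℕ := if b then pXZero else pYZero

/-- The states of the DFA `A_M`: the states of `M` plus four auxiliary states
(then₁, then₂, else₁, else₂) per state of `M`, plus a sink (`none`). -/
abbrev AState (M : TCA) : Type := Option (M.State ⊕ M.State × Fin 4)

/-- The transition function of the DFA `A_M`: the instruction of each state
`q` of `M` is compiled into the 'then' branch reading
`Σ(C==0), Σ(C==0), Σ(C+=1)` (ending in `qt q`) and the 'else' branch reading
`Σ(C-=1), Σ(C+=1), Σ(C+=d)` (ending in `qf q`). -/
def TCA.delta (M : TCA) : AState M → ℕ → AState M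
  | none, _ => none
  | some (Sum.inl q), a =>
    if a = sZero (M.cX q) then some (Sum.inr (q, (0 : Fin 4)))
    else if a = sDecr (M.cX q) then some (Sum.inr (q, (2 : Fin 4)))
    else none
  | some (Sum.inr (q, i)), a =>
    if i = (0 : Fin 4) then
      (if a = sZero (M.cX q) then some (Sum.inr (q, (1 : Fin 4))) else none)
    else if i = (1 : Fin 4) then
      (if a = sIncr (M.cX q) then some (Sum.inl (M.qt q)) else none)
    else if i = (2 : Fin 4) then
      (if a = sIncr (M.cX q) then some (Sum.inr (q, (3 : Fin 4))) else none)
    else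
      (if a = (if M.dPlus q then sIncr (M.cX q) else sDecr (M.cX q))
        then some (Sum.inl (M.qf q)) else none)

/-- The DFA `A_M` simulating the TCA `M`; its starting (accepting) state is
the starting (halting) state of `M`. -/
def tcaDFA (M : TCA) : DFA ℕ (AState M) :=
  ⟨M.delta, some (Sum.inl M.q0), {some (Sum.inl M.qhalt)}⟩

/-- The fixed database `D_grid = {Succ(a,b), Zero(a)}` (constants `a = 0`, `b = 1`). -/
def Dgrid : Database := [(pSucc, [0, 1]), (pZero, [0])]

/-- The fixed grid-building ruleset `R_grid`. -/
def Rgrid : Ruleset :=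
  [ ([(pSucc, [0, 1])], (pSucc, [1, 2])),
    ([(pSucc, [0, 1]), (pSucc, [2, 3])], (pGridPoint, [0, 2, 4])),
    ([(pGridPoint, [0, 1, 2])], (pXCoord, [2, 0])),
    ([(pGridPoint, [0, 1, 2])], (pYCoord, [2, 1])),
    ([(pXCoord, [3, 0]), (pYCoord, [3, 2]), (pXCoord, [4, 1]), (pYCoord, [4, 2]),
       (pSucc, [0, 1])], (pIncX, [3, 4])),
    ([(pXCoord, [3, 0]), (pYCoord, [3, 2]), (pXCoord, [4, 0]), (pYCoord, [4, 5]),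
       (pSucc, [2, 5])], (pIncY, [3, 4])),
    ([(pIncX, [0, 1])], (pDecX, [1, 0])),
    ([(pIncY, [0, 1])], (pDecY, [1, 0])),
    ([(pXCoord, [0, 1]), (pZero, [1])], (pXZero, [0, 0])),
    ([(pYCoord, [0, 1]), (pZero, [1])], (pYZero, [0, 0])) ]

/-- The grid point with coordinates `(x, y)`. -/
def gpt (x y : ℕ) : GTerm := GTerm.func 0 [GTerm.const x, GTerm.const y]

/-- The infinite grid instance `G`: terms are coordinate pairs, with
`IncX`/`IncY`/`DecX`/`DecY` edges and `XZero`/`YZero` self-loops. -/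
def GridInst : Inst :=
  {α | (∃ x y, α = ⟨pIncX, [gpt x y, gpt (x + 1) y]⟩) ∨
       (∃ x y, α = ⟨pIncY, [gpt x y, gpt x (y + 1)]⟩) ∨
       (∃ x y, α = ⟨pDecX, [gpt (x + 1) y, gpt x y]⟩) ∨
       (∃ x y, α = ⟨pDecY, [gpt x (y + 1), gpt x y]⟩) ∨
       (∃ y, α = ⟨pXZero, [gpt 0 y, gpt 0 y]⟩) ∨
       (∃ x, α = ⟨pYZero, [gpt x 0, gpt x 0]⟩)}

/-- One step of the DFA `A_M` walking over the instance `I`: move along an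
edge of `I` whose label matches a transition from the current state. -/
def walkStep (M : TCA) (I : Inst) (c c' : AState M × GTerm) : Prop :=
  ∃ p, (⟨p, [c.2, c'.2]⟩ : GAtom) ∈ I ∧ M.delta c.1 p = c'.1

/-! ### Encoding regular expressions (for computability statements) -/

/-- A concrete injective serialization of regular expressions (over an
encodable alphabet) as lists of naturals. -/
def encodeREg {α : Type} [Encodable α] : RegularExpression α → List ℕ
  | RegularExpression.zero => [0]
  | RegularExpression.epsilon => [1]
  | RegularExpression.char a => [2, Encodable.encode a]
  | RegularExpression.plus a b => 3 :: (encodeREg a ++ encodeREg b)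
  | RegularExpression.comp a b => 4 :: (encodeREg a ++ encodeREg b)
  | RegularExpression.star a => 5 :: encodeREg a

/-! ### Datalog rules, two-way and higher-arity path queries -/

/-- A Datalog rule: no existential variables in the head. -/
def isDatalogRule (ρ : ERule) : Prop := ∀ v ∈ ρ.2.2, v ∈ bodyVarList ρ

/-- The predicates occurring in a database. -/
def dbPreds (D : Database) : Set ℕ := {p | ∃ a ∈ D, a.1 = p}

/-- The predicates occurring in a ruleset. -/
def rsPreds (R : Ruleset) : Set ℕ := {p | ∃ ρ ∈ R, (∃ a ∈ ρ.1, a.1 = p) ∨ ρ.2.1 = p}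

/-- The predicates occurring in rule heads of a ruleset. -/
def headPreds (R : Ruleset) : Set ℕ := {p | ∃ ρ ∈ R, ρ.2.1 = p}

/-- A two-way path: `inl p` traverses a `p`-edge forwards, `inr p` (i.e. `p⁻`)
traverses a `p`-edge backwards. -/
inductive IPath2 (I : Inst) : GTerm → List (ℕ ⊕ ℕ) → GTerm → Prop where
  | nil (t : GTerm) : IPath2 I t [] t
  | fwd {s t u : GTerm} {p : ℕ} {w : List (ℕ ⊕ ℕ)} :
      (⟨p, [s, t]⟩ : GAtom) ∈ I → IPath2 I t w u → IPath2 I s (Sum.inl p :: w) u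
  | bwd {s t u : GTerm} {p : ℕ} {w : List (ℕ ⊕ ℕ)} :
      (⟨p, [t, s]⟩ : GAtom) ∈ I → IPath2 I t w u → IPath2 I s (Sum.inr p :: w) u

/-- Satisfaction of a Boolean 2RPQ given by a regular expression over
`Σ ∪ Σ⁻`. -/
def sat2RPQ (I : Inst) (A : RegularExpression (ℕ ⊕ ℕ)) : Prop :=
  ∃ s t w, s ∈ adom I ∧ t ∈ adom I ∧ IPath2 I s w t ∧ w ∈ A.matches'

/-- Entailment of a Boolean 2RPQ. -/
def entails2RPQ (D : Database) (R : Ruleset) (A : RegularExpression (ℕ ⊕ ℕ)) : Prop :=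
  ∀ I : Inst, isModelOf I D R → sat2RPQ I A

/-- A higher-arity path: an atom `P(t₁, t₂, …, tₙ)` (arity ≥ 2) contributes a
`P`-labelled edge from `t₁` to `t₂`. -/
inductive HPath (I : Inst) : GTerm → List ℕ → GTerm → Prop where
  | nil (t : GTerm) : HPath I t [] t
  | cons {s t u : GTerm} {p : ℕ} {w : List ℕ} (rest : List GTerm) :
      (⟨p, s :: t :: rest⟩ : GAtom) ∈ I → HPath I t w u → HPath I s (p :: w) u

/-- Satisfaction of a Boolean higher-arity RPQ (HRPQ). -/
def satHRPQ (I : Inst) (A : RegularExpression ℕ) : Prop :=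
  ∃ s t w, s ∈ adom I ∧ t ∈ adom I ∧ HPath I s w t ∧ w ∈ A.matches'

/-- Entailment of a Boolean HRPQ. -/
def entailsHRPQ (D : Database) (R : Ruleset) (A : RegularExpression ℕ) : Prop :=
  ∀ I : Inst, isModelOf I D R → satHRPQ I A

/-- A ruleset is finitely RPQ-controllable: every non-entailed Boolean RPQ
has a finite countermodel. -/
def finitelyRPQControllable (R : Ruleset) : Prop :=
  ∀ (A : RegularExpression ℕ) (D : Database),
    ¬ entailsRPQ D R A → ∃ I : Inst, I.Finite ∧ isModelOf I D R ∧ ¬ satRPQ I A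

/-!
The chase of `D_grid` under `R_grid` can be computed outright: besides the `Succ`-chain
`0, 1, 2, …` and the coordinate atoms, it is the grid `ℕ × ℕ` with `IncX`/`IncY` edges, their
reverses `DecX`/`DecY`, `XZero` loops on the column `x = 0` and `YZero` loops on the row `y = 0`.
Every binary relation of this instance is a partial function, so a path is determined by its
start and its label, and the prefix `XZero · YZero` pins the start to the origin. From a main
state `q` at the grid point `(x, y)`, the automaton `A_M` returns to a main state only through
one of the two branch words of `q`. The first letter of the 'then' word is a zero loop and that
of the 'else' word a decrement, so a path can only follow the branch that `M` takes in the
configuration `(q, x, y)`, and by determinism it reaches the grid point of the next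
configuration. Hence the accepting paths from the origin are exactly the halting runs of `M`.
-/

section Chase

variable {R : Set ERule} {I J : Inst}

lemma chaseStep_mono (R : Set ERule) : Monotone (chaseStep R) := by
  rintro I J hIJ α (hα | ⟨ρ, hρ, h, hb, rfl⟩)
  · exact Or.inl (hIJ hα)
  · exact Or.inr ⟨ρ, hρ, h, fun a ha => hIJ (hb a ha), rfl⟩

lemma chaseStage_mono (R : Set ERule) (I : Inst) : Monotone (chaseStage R I) :=
  monotone_nat_of_le_succ fun _ => Set.subset_union_left

lemma subset_chase : I ⊆ chase I R :=
  Set.subset_iUnion (chaseStage R I) 0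

lemma chase_subset_of_chaseStep_subset (hIJ : I ⊆ J) (hJ : chaseStep R J ⊆ J) :
    chase I R ⊆ J := by
  refine Set.iUnion_subset fun n => ?_
  induction n with
  | zero => exact hIJ
  | succ n ih => exact (chaseStep_mono R ih).trans hJ

lemma exists_chaseStage_of_forall_mem_chase {h : ℕ → GTerm} {l : List PAtom}
    (hl : ∀ a ∈ l, substAtom h a ∈ chase I R) :
    ∃ n, ∀ a ∈ l, substAtom h a ∈ chaseStage R I n := by
  induction l with
  | nil => exact ⟨0, by simp⟩
  | cons a l ih =>
    obtain ⟨m, hm⟩ := Set.mem_iUnion.mp (hl a List.mem_cons_self)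
    obtain ⟨n, hn⟩ := ih fun b hb => hl b (List.mem_cons_of_mem a hb)
    refine ⟨max m n, List.forall_mem_cons.mpr ⟨?_, fun b hb => ?_⟩⟩
    · exact chaseStage_mono R I (le_max_left m n) hm
    · exact chaseStage_mono R I (le_max_right m n) (hn b hb)

lemma skolemAtom_mem_chase {ρ : ERule} (hρ : ρ ∈ R) {h : ℕ → GTerm}
    (hb : ∀ a ∈ ρ.1, substAtom h a ∈ chase I R) : skolemAtom ρ h ∈ chase I R := by
  obtain ⟨n, hn⟩ := exists_chaseStage_of_forall_mem_chase hb
  exact Set.subset_iUnion (chaseStage R I) (n + 1) (Or.inr ⟨ρ, hρ, h, hn, rfl⟩)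

lemma skolemAtom_of_isDatalogRule {ρ : ERule} (hρ : isDatalogRule ρ) (h : ℕ → GTerm) :
    skolemAtom ρ h = substAtom h ρ.2 := by
  simp only [skolemAtom, substAtom]
  congr 1
  exact List.map_congr_left fun v hv => if_pos (hρ v hv)

lemma head_mem_chase_of_isDatalogRule {ρ : ERule} (hρR : ρ ∈ R) (hρ : isDatalogRule ρ)
    (h : ℕ → GTerm) (hb : ∀ a ∈ ρ.1, substAtom h a ∈ chase I R) :
    substAtom h ρ.2 ∈ chase I R :=
  skolemAtom_of_isDatalogRule hρ h ▸ skolemAtom_mem_chase hρR hb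

end Chase

section IPath

variable {I : Inst}

lemma IPath.append {s t u : GTerm} {v w : List ℕ} (hv : IPath I s v t) (hw : IPath I t w u) :
    IPath I s (v ++ w) u := by
  induction hv with
  | nil => exact hw
  | cons he _ ih => exact .cons he (ih hw)

lemma IPath.of_append {s u : GTerm} {v w : List ℕ} (h : IPath I s (v ++ w) u) :
    ∃ t, IPath I s v t ∧ IPath I t w u := by
  induction v generalizing s with
  | nil => exact ⟨s, .nil s, h⟩
  | cons p v ih =>
    obtain _ | ⟨he, hrest⟩ := h
    obtain ⟨t, hv, hw⟩ := ih hrest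
    exact ⟨t, .cons he hv, hw⟩

lemma IPath.eq_of_functional
    (hI : ∀ p s t t', (⟨p, [s, t]⟩ : GAtom) ∈ I → (⟨p, [s, t']⟩ : GAtom) ∈ I → t = t')
    {s t t' : GTerm} {w : List ℕ} (h : IPath I s w t) (h' : IPath I s w t') : t = t' := by
  induction h with
  | nil => cases h'; rfl
  | cons he _ ih =>
    obtain _ | ⟨he', hrest⟩ := h'
    exact ih (hI _ _ _ _ he he' ▸ hrest)

end IPath

section GridChase

def succRule : ERule := ([(pSucc, [0, 1])], (pSucc, [1, 2]))
def gridPointRule : ERule := ([(pSucc, [0, 1]), (pSucc, [2, 3])], (pGridPoint, [0, 2, 4]))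
def xCoordRule : ERule := ([(pGridPoint, [0, 1, 2])], (pXCoord, [2, 0]))
def yCoordRule : ERule := ([(pGridPoint, [0, 1, 2])], (pYCoord, [2, 1]))
def incXRule : ERule :=
  ([(pXCoord, [3, 0]), (pYCoord, [3, 2]), (pXCoord, [4, 1]), (pYCoord, [4, 2]), (pSucc, [0, 1])],
    (pIncX, [3, 4]))
def incYRule : ERule :=
  ([(pXCoord, [3, 0]), (pYCoord, [3, 2]), (pXCoord, [4, 0]), (pYCoord, [4, 5]), (pSucc, [2, 5])],
    (pIncY, [3, 4]))
def decXRule : ERule := ([(pIncX, [0, 1])], (pDecX, [1, 0]))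
def decYRule : ERule := ([(pIncY, [0, 1])], (pDecY, [1, 0]))
def xZeroRule : ERule := ([(pXCoord, [0, 1]), (pZero, [1])], (pXZero, [0, 0]))
def yZeroRule : ERule := ([(pYCoord, [0, 1]), (pZero, [1])], (pYZero, [0, 0]))

def gridDatalogRules : List ERule :=
  [xCoordRule, yCoordRule, incXRule, incYRule, decXRule, decYRule, xZeroRule, yZeroRule]

lemma Rgrid_eq : Rgrid = succRule :: gridPointRule :: gridDatalogRules := rfl

lemma isDatalogRule_of_mem_gridDatalogRules {ρ : ERule} (hρ : ρ ∈ gridDatalogRules) :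
    isDatalogRule ρ := by
  simp only [gridDatalogRules, List.mem_cons, List.not_mem_nil, or_false] at hρ
  rcases hρ with rfl | rfl | rfl | rfl | rfl | rfl | rfl | rfl <;>
  · unfold isDatalogRule; decide

-- The Skolem symbols that `skolemAtom` gives to the existential variables of `succRule` and
-- `gridPointRule`.
def skSucc : ℕ := Encodable.encode (((pSucc, [Sum.inl 0, Sum.inr 0]) : ℕ × List (ℕ ⊕ ℕ)), 0)
def skGridPt : ℕ :=
  Encodable.encode (((pGridPoint, [Sum.inl 0, Sum.inl 1, Sum.inr 0]) : ℕ × List (ℕ ⊕ ℕ)), 0)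
def skGridPtDiag : ℕ :=
  Encodable.encode (((pGridPoint, [Sum.inl 0, Sum.inl 0, Sum.inr 0]) : ℕ × List (ℕ ⊕ ℕ)), 0)

lemma skolemAtom_succRule (h : ℕ → GTerm) :
    skolemAtom succRule h = ⟨pSucc, [h 1, GTerm.func skSucc [h 1]]⟩ := by
  simp [skolemAtom, succRule, bodyVarList, skSucc, List.findIdx, List.findIdx.go,
    List.dedup_cons_of_notMem, List.filterMap_cons, Sum.getRight?_inl, Sum.getRight?_inr]

lemma skolemAtom_gridPointRule_of_ne (h : ℕ → GTerm) (hne : h 0 ≠ h 2) :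
    skolemAtom gridPointRule h = ⟨pGridPoint, [h 0, h 2, GTerm.func skGridPt [h 0, h 2]]⟩ := by
  simp [skolemAtom, gridPointRule, bodyVarList, skGridPt, List.findIdx, List.findIdx.go, hne,
    Ne.symm hne, List.dedup_cons_of_notMem, List.filterMap_cons, Sum.getRight?_inl,
    Sum.getRight?_inr]

lemma skolemAtom_gridPointRule_of_eq (h : ℕ → GTerm) (heq : h 0 = h 2) :
    skolemAtom gridPointRule h = ⟨pGridPoint, [h 0, h 0, GTerm.func skGridPtDiag [h 0]]⟩ := by
  simp [skolemAtom, gridPointRule, bodyVarList, skGridPtDiag, List.findIdx, List.findIdx.go,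
    ← heq, List.dedup_cons_of_notMem, List.filterMap_cons, Sum.getRight?_inl,
    Sum.getRight?_inr]

def numTerm : ℕ → GTerm
  | 0 => GTerm.const 0
  | 1 => GTerm.const 1
  | n + 2 => GTerm.func skSucc [numTerm (n + 1)]

def numOfTerm : GTerm → ℕ
  | .func _ (t :: _) => numOfTerm t + 1
  | .const n => n
  | _ => 0

lemma numOfTerm_numTerm : Function.LeftInverse numOfTerm numTerm
  | 0 => rfl
  | 1 => rfl
  | n + 2 => by simp [numTerm, numOfTerm, numOfTerm_numTerm (n + 1)]

lemma numTerm_injective : Function.Injective numTerm :=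
  numOfTerm_numTerm.injective

/-- Diagonal points carry a Skolem symbol of their own, see `skolemAtom_gridPointRule_of_eq`. -/
def gridPt (x y : ℕ) : GTerm :=
  if x = y then GTerm.func skGridPtDiag [numTerm x]
  else GTerm.func skGridPt [numTerm x, numTerm y]

lemma gridPt_inj {x y x' y' : ℕ} : gridPt x y = gridPt x' y' ↔ x = x' ∧ y = y' := by
  refine ⟨fun h => ?_, fun ⟨hx, hy⟩ => hx ▸ hy ▸ rfl⟩
  unfold gridPt at h
  split_ifs at h <;> simp only [GTerm.func.injEq, List.cons.injEq, numTerm_injective.eq_iff,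
    reduceCtorEq, and_false, and_true, true_and] at h <;> omega

def gridChase : Inst :=
  {α | (∃ n, α = ⟨pSucc, [numTerm n, numTerm (n + 1)]⟩) ∨
       α = ⟨pZero, [numTerm 0]⟩ ∨
       (∃ x y, α = ⟨pGridPoint, [numTerm x, numTerm y, gridPt x y]⟩) ∨
       (∃ x y, α = ⟨pXCoord, [gridPt x y, numTerm x]⟩) ∨
       (∃ x y, α = ⟨pYCoord, [gridPt x y, numTerm y]⟩) ∨
       (∃ x y, α = ⟨pIncX, [gridPt x y, gridPt (x + 1) y]⟩) ∨
       (∃ x y, α = ⟨pIncY, [gridPt x y, gridPt x (y + 1)]⟩) ∨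
       (∃ x y, α = ⟨pDecX, [gridPt (x + 1) y, gridPt x y]⟩) ∨
       (∃ x y, α = ⟨pDecY, [gridPt x (y + 1), gridPt x y]⟩) ∨
       (∃ y, α = ⟨pXZero, [gridPt 0 y, gridPt 0 y]⟩) ∨
       (∃ x, α = ⟨pYZero, [gridPt x 0, gridPt x 0]⟩)}

section Membership

variable {s t u : GTerm}

lemma succ_mem_gridChase_iff : (⟨pSucc, [s, t]⟩ : GAtom) ∈ gridChase ↔
    ∃ n, s = numTerm n ∧ t = numTerm (n + 1) := by
  simp [gridChase, pIncX, pIncY, pDecX, pDecY, pXZero, pYZero, pSucc, pZero, pGridPoint,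
    pXCoord, pYCoord]

lemma zero_mem_gridChase_iff : (⟨pZero, [s]⟩ : GAtom) ∈ gridChase ↔ s = numTerm 0 := by
  simp [gridChase, pIncX, pIncY, pDecX, pDecY, pXZero, pYZero, pSucc, pZero, pGridPoint,
    pXCoord, pYCoord]

lemma gridPoint_mem_gridChase_iff : (⟨pGridPoint, [s, t, u]⟩ : GAtom) ∈ gridChase ↔
    ∃ x y, s = numTerm x ∧ t = numTerm y ∧ u = gridPt x y := by
  simp [gridChase, pIncX, pIncY, pDecX, pDecY, pXZero, pYZero, pSucc, pZero, pGridPoint,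
    pXCoord, pYCoord]

lemma xCoord_mem_gridChase_iff : (⟨pXCoord, [s, t]⟩ : GAtom) ∈ gridChase ↔
    ∃ x y, s = gridPt x y ∧ t = numTerm x := by
  simp [gridChase, pIncX, pIncY, pDecX, pDecY, pXZero, pYZero, pSucc, pZero, pGridPoint,
    pXCoord, pYCoord]

lemma yCoord_mem_gridChase_iff : (⟨pYCoord, [s, t]⟩ : GAtom) ∈ gridChase ↔
    ∃ x y, s = gridPt x y ∧ t = numTerm y := by
  simp [gridChase, pIncX, pIncY, pDecX, pDecY, pXZero, pYZero, pSucc, pZero, pGridPoint,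
    pXCoord, pYCoord]

lemma incX_mem_gridChase_iff : (⟨pIncX, [s, t]⟩ : GAtom) ∈ gridChase ↔
    ∃ x y, s = gridPt x y ∧ t = gridPt (x + 1) y := by
  simp [gridChase, pIncX, pIncY, pDecX, pDecY, pXZero, pYZero, pSucc, pZero, pGridPoint,
    pXCoord, pYCoord]

lemma incY_mem_gridChase_iff : (⟨pIncY, [s, t]⟩ : GAtom) ∈ gridChase ↔
    ∃ x y, s = gridPt x y ∧ t = gridPt x (y + 1) := by
  simp [gridChase, pIncX, pIncY, pDecX, pDecY, pXZero, pYZero, pSucc, pZero, pGridPoint,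
    pXCoord, pYCoord]

lemma decX_mem_gridChase_iff : (⟨pDecX, [s, t]⟩ : GAtom) ∈ gridChase ↔
    ∃ x y, s = gridPt (x + 1) y ∧ t = gridPt x y := by
  simp [gridChase, pIncX, pIncY, pDecX, pDecY, pXZero, pYZero, pSucc, pZero, pGridPoint,
    pXCoord, pYCoord]

lemma decY_mem_gridChase_iff : (⟨pDecY, [s, t]⟩ : GAtom) ∈ gridChase ↔
    ∃ x y, s = gridPt x (y + 1) ∧ t = gridPt x y := by
  simp [gridChase, pIncX, pIncY, pDecX, pDecY, pXZero, pYZero, pSucc, pZero, pGridPoint,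
    pXCoord, pYCoord]

lemma xZero_mem_gridChase_iff : (⟨pXZero, [s, t]⟩ : GAtom) ∈ gridChase ↔
    ∃ y, s = gridPt 0 y ∧ t = gridPt 0 y := by
  simp [gridChase, pIncX, pIncY, pDecX, pDecY, pXZero, pYZero, pSucc, pZero, pGridPoint,
    pXCoord, pYCoord]

lemma yZero_mem_gridChase_iff : (⟨pYZero, [s, t]⟩ : GAtom) ∈ gridChase ↔
    ∃ x, s = gridPt x 0 ∧ t = gridPt x 0 := by
  simp [gridChase, pIncX, pIncY, pDecX, pDecY, pXZero, pYZero, pSucc, pZero, pGridPoint,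
    pXCoord, pYCoord]

lemma exists_eq_gridPt_of_coord_mem_gridChase (hx : (⟨pXCoord, [s, t]⟩ : GAtom) ∈ gridChase)
    (hy : (⟨pYCoord, [s, u]⟩ : GAtom) ∈ gridChase) :
    ∃ x y, s = gridPt x y ∧ t = numTerm x ∧ u = numTerm y := by
  obtain ⟨x, y, rfl, rfl⟩ := xCoord_mem_gridChase_iff.mp hx
  obtain ⟨x', y', hs, rfl⟩ := yCoord_mem_gridChase_iff.mp hy
  obtain ⟨rfl, rfl⟩ := gridPt_inj.mp hs
  exact ⟨x, y, rfl, rfl, rfl⟩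

end Membership

lemma gridChase_functional (p : ℕ) (s t t' : GTerm) (h : (⟨p, [s, t]⟩ : GAtom) ∈ gridChase)
    (h' : (⟨p, [s, t']⟩ : GAtom) ∈ gridChase) : t = t' := by
  simp only [gridChase, Set.mem_ofPred_eq, GAtom.mk.injEq, List.cons.injEq] at h h'
  rcases h with ⟨n, rfl, rfl, rfl, -⟩ | ⟨rfl, -⟩ | ⟨x, y, rfl, -⟩ | ⟨x, y, rfl, rfl, rfl, -⟩ |
    ⟨x, y, rfl, rfl, rfl, -⟩ | ⟨x, y, rfl, rfl, rfl, -⟩ | ⟨x, y, rfl, rfl, rfl, -⟩ |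
    ⟨x, y, rfl, rfl, rfl, -⟩ | ⟨x, y, rfl, rfl, rfl, -⟩ | ⟨y, rfl, rfl, rfl, -⟩ |
    ⟨x, rfl, rfl, rfl, -⟩ <;>
  simp [pIncX, pIncY, pDecX, pDecY, pXZero, pYZero, pSucc, pZero, pGridPoint, pXCoord,
    pYCoord, gridPt_inj, numTerm_injective.eq_iff] at h' ⊢ <;>
  exact h'.symm

lemma head_mem_gridChase_of_mem_gridDatalogRules {ρ : ERule} (hρ : ρ ∈ gridDatalogRules)
    {h : ℕ → GTerm} (hb : ∀ a ∈ ρ.1, substAtom h a ∈ gridChase) :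
    substAtom h ρ.2 ∈ gridChase := by
  simp only [gridDatalogRules, List.mem_cons, List.not_mem_nil, or_false] at hρ
  rcases hρ with rfl | rfl | rfl | rfl | rfl | rfl | rfl | rfl <;>
  simp only [xCoordRule, yCoordRule, incXRule, incYRule, decXRule, decYRule, xZeroRule,
    yZeroRule, List.forall_mem_cons, List.not_mem_nil, IsEmpty.forall_iff, implies_true,
    and_true, substAtom, List.map] at hb ⊢
  · obtain ⟨x, y, h0, -, h2⟩ := gridPoint_mem_gridChase_iff.mp hb
    exact xCoord_mem_gridChase_iff.mpr ⟨x, y, h2, h0⟩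
  · obtain ⟨x, y, -, h1, h2⟩ := gridPoint_mem_gridChase_iff.mp hb
    exact yCoord_mem_gridChase_iff.mpr ⟨x, y, h2, h1⟩
  · obtain ⟨hx3, hy3, hx4, hy4, hs⟩ := hb
    obtain ⟨x, y, h3, h0, h2⟩ := exists_eq_gridPt_of_coord_mem_gridChase hx3 hy3
    obtain ⟨x', y', h4, h1, h2'⟩ := exists_eq_gridPt_of_coord_mem_gridChase hx4 hy4
    obtain ⟨n, h0', h1'⟩ := succ_mem_gridChase_iff.mp hs
    obtain ⟨rfl, rfl, rfl⟩ : x = n ∧ x' = n + 1 ∧ y' = y := by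
      simp only [← numTerm_injective.eq_iff]
      exact ⟨h0 ▸ h0', h1 ▸ h1', h2' ▸ h2⟩
    exact incX_mem_gridChase_iff.mpr ⟨_, _, h3, h4⟩
  · obtain ⟨hx3, hy3, hx4, hy4, hs⟩ := hb
    obtain ⟨x, y, h3, h0, h2⟩ := exists_eq_gridPt_of_coord_mem_gridChase hx3 hy3
    obtain ⟨x', y', h4, h0', h5⟩ := exists_eq_gridPt_of_coord_mem_gridChase hx4 hy4
    obtain ⟨n, h2', h5'⟩ := succ_mem_gridChase_iff.mp hs
    obtain ⟨rfl, rfl, rfl⟩ : x' = x ∧ y = n ∧ y' = n + 1 := by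
      simp only [← numTerm_injective.eq_iff]
      exact ⟨h0' ▸ h0, h2 ▸ h2', h5 ▸ h5'⟩
    exact incY_mem_gridChase_iff.mpr ⟨_, _, h3, h4⟩
  · obtain ⟨x, y, h0, h1⟩ := incX_mem_gridChase_iff.mp hb
    exact decX_mem_gridChase_iff.mpr ⟨x, y, h1, h0⟩
  · obtain ⟨x, y, h0, h1⟩ := incY_mem_gridChase_iff.mp hb
    exact decY_mem_gridChase_iff.mpr ⟨x, y, h1, h0⟩
  · obtain ⟨x, y, h0, h1⟩ := xCoord_mem_gridChase_iff.mp hb.1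
    obtain rfl : x = 0 := numTerm_injective (h1 ▸ zero_mem_gridChase_iff.mp hb.2)
    exact xZero_mem_gridChase_iff.mpr ⟨y, h0, h0⟩
  · obtain ⟨x, y, h0, h1⟩ := yCoord_mem_gridChase_iff.mp hb.1
    obtain rfl : y = 0 := numTerm_injective (h1 ▸ zero_mem_gridChase_iff.mp hb.2)
    exact yZero_mem_gridChase_iff.mpr ⟨x, h0, h0⟩

lemma skolemAtom_mem_gridChase {ρ : ERule} (hρ : ρ ∈ Rgrid) {h : ℕ → GTerm}
    (hb : ∀ a ∈ ρ.1, substAtom h a ∈ gridChase) : skolemAtom ρ h ∈ gridChase := by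
  rw [Rgrid_eq, List.mem_cons, List.mem_cons] at hρ
  rcases hρ with rfl | rfl | hρ
  · obtain ⟨n, -, h1⟩ := succ_mem_gridChase_iff.mp (hb _ List.mem_cons_self)
    rw [skolemAtom_succRule, h1]
    exact succ_mem_gridChase_iff.mpr ⟨n + 1, rfl, rfl⟩
  · simp only [gridPointRule, List.forall_mem_cons, List.not_mem_nil, IsEmpty.forall_iff,
      implies_true, and_true, substAtom, List.map, succ_mem_gridChase_iff] at hb
    obtain ⟨⟨x, h0, -⟩, ⟨y, h2, -⟩⟩ := hb
    by_cases hxy : x = y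
    · rw [skolemAtom_gridPointRule_of_eq h (by rw [h0, h2, hxy]), h0]
      exact gridPoint_mem_gridChase_iff.mpr ⟨x, x, rfl, rfl, by simp [gridPt]⟩
    · rw [skolemAtom_gridPointRule_of_ne h (by rwa [h0, h2, numTerm_injective.ne_iff]), h0, h2]
      exact gridPoint_mem_gridChase_iff.mpr ⟨x, y, rfl, rfl, by simp [gridPt, hxy]⟩
  · rw [skolemAtom_of_isDatalogRule (isDatalogRule_of_mem_gridDatalogRules hρ)]
    exact head_mem_gridChase_of_mem_gridDatalogRules hρ hb

end GridChase

section ChaseOfGrid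

local notation "𝒞" => chase (dbInst Dgrid) (rsSet Rgrid)

lemma head_mem_chase_grid {ρ : ERule} (hρ : ρ ∈ gridDatalogRules) (h : ℕ → GTerm)
    (hb : ∀ a ∈ ρ.1, substAtom h a ∈ 𝒞) : substAtom h ρ.2 ∈ 𝒞 :=
  head_mem_chase_of_isDatalogRule (by simp [rsSet, Rgrid_eq, hρ])
    (isDatalogRule_of_mem_gridDatalogRules hρ) h hb

lemma succ_mem_chase_grid (n : ℕ) : (⟨pSucc, [numTerm n, numTerm (n + 1)]⟩ : GAtom) ∈ 𝒞 := by
  induction n with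
  | zero => exact subset_chase ⟨(pSucc, [0, 1]), by simp [Dgrid], rfl⟩
  | succ n ih =>
    set h : ℕ → GTerm := fun v => [numTerm n, numTerm (n + 1)].getD v (.const 0)
    have hmem : skolemAtom succRule h ∈ 𝒞 :=
      skolemAtom_mem_chase (by simp [rsSet, Rgrid_eq]) (by simpa [succRule, substAtom, h] using ih)
    rwa [skolemAtom_succRule] at hmem

lemma zero_mem_chase_grid : (⟨pZero, [numTerm 0]⟩ : GAtom) ∈ 𝒞 :=
  subset_chase ⟨(pZero, [0]), by simp [Dgrid], rfl⟩

lemma gridPoint_mem_chase_grid (x y : ℕ) :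
    (⟨pGridPoint, [numTerm x, numTerm y, gridPt x y]⟩ : GAtom) ∈ 𝒞 := by
  set h : ℕ → GTerm :=
    fun v => [numTerm x, numTerm (x + 1), numTerm y, numTerm (y + 1)].getD v (.const 0)
  have hmem : skolemAtom gridPointRule h ∈ 𝒞 :=
    skolemAtom_mem_chase (by simp [rsSet, Rgrid_eq]) (by
      simpa [gridPointRule, substAtom, h] using ⟨succ_mem_chase_grid x, succ_mem_chase_grid y⟩)
  by_cases hxy : x = y
  · subst hxy
    rw [gridPt, if_pos rfl]
    rwa [skolemAtom_gridPointRule_of_eq h rfl] at hmem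
  · rw [gridPt, if_neg hxy]
    rwa [skolemAtom_gridPointRule_of_ne h (numTerm_injective.ne hxy)] at hmem

lemma xCoord_mem_chase_grid (x y : ℕ) : (⟨pXCoord, [gridPt x y, numTerm x]⟩ : GAtom) ∈ 𝒞 :=
  head_mem_chase_grid (ρ := xCoordRule) (by simp [gridDatalogRules])
    (fun v => [numTerm x, numTerm y, gridPt x y].getD v (.const 0))
    (by simpa [xCoordRule, substAtom] using gridPoint_mem_chase_grid x y)

lemma yCoord_mem_chase_grid (x y : ℕ) : (⟨pYCoord, [gridPt x y, numTerm y]⟩ : GAtom) ∈ 𝒞 :=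
  head_mem_chase_grid (ρ := yCoordRule) (by simp [gridDatalogRules])
    (fun v => [numTerm x, numTerm y, gridPt x y].getD v (.const 0))
    (by simpa [yCoordRule, substAtom] using gridPoint_mem_chase_grid x y)

lemma incX_mem_chase_grid (x y : ℕ) :
    (⟨pIncX, [gridPt x y, gridPt (x + 1) y]⟩ : GAtom) ∈ 𝒞 :=
  head_mem_chase_grid (ρ := incXRule) (by simp [gridDatalogRules])
    (fun v =>
      [numTerm x, numTerm (x + 1), numTerm y, gridPt x y, gridPt (x + 1) y].getD v (.const 0))
    (by simpa [incXRule, substAtom] using ⟨xCoord_mem_chase_grid x y, yCoord_mem_chase_grid x y,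
      xCoord_mem_chase_grid (x + 1) y, yCoord_mem_chase_grid (x + 1) y, succ_mem_chase_grid x⟩)

lemma incY_mem_chase_grid (x y : ℕ) :
    (⟨pIncY, [gridPt x y, gridPt x (y + 1)]⟩ : GAtom) ∈ 𝒞 :=
  head_mem_chase_grid (ρ := incYRule) (by simp [gridDatalogRules])
    (fun v => [numTerm x, numTerm 0, numTerm y, gridPt x y, gridPt x (y + 1),
      numTerm (y + 1)].getD v (.const 0))
    (by simpa [incYRule, substAtom] using ⟨xCoord_mem_chase_grid x y, yCoord_mem_chase_grid x y,
      xCoord_mem_chase_grid x (y + 1), yCoord_mem_chase_grid x (y + 1), succ_mem_chase_grid y⟩)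

lemma decX_mem_chase_grid (x y : ℕ) :
    (⟨pDecX, [gridPt (x + 1) y, gridPt x y]⟩ : GAtom) ∈ 𝒞 :=
  head_mem_chase_grid (ρ := decXRule) (by simp [gridDatalogRules])
    (fun v => [gridPt x y, gridPt (x + 1) y].getD v (.const 0))
    (by simpa [decXRule, substAtom] using incX_mem_chase_grid x y)

lemma decY_mem_chase_grid (x y : ℕ) :
    (⟨pDecY, [gridPt x (y + 1), gridPt x y]⟩ : GAtom) ∈ 𝒞 :=
  head_mem_chase_grid (ρ := decYRule) (by simp [gridDatalogRules])
    (fun v => [gridPt x y, gridPt x (y + 1)].getD v (.const 0))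
    (by simpa [decYRule, substAtom] using incY_mem_chase_grid x y)

lemma xZero_mem_chase_grid (y : ℕ) : (⟨pXZero, [gridPt 0 y, gridPt 0 y]⟩ : GAtom) ∈ 𝒞 :=
  head_mem_chase_grid (ρ := xZeroRule) (by simp [gridDatalogRules])
    (fun v => [gridPt 0 y, numTerm 0].getD v (.const 0))
    (by simpa [xZeroRule, substAtom] using ⟨xCoord_mem_chase_grid 0 y, zero_mem_chase_grid⟩)

lemma yZero_mem_chase_grid (x : ℕ) : (⟨pYZero, [gridPt x 0, gridPt x 0]⟩ : GAtom) ∈ 𝒞 :=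
  head_mem_chase_grid (ρ := yZeroRule) (by simp [gridDatalogRules])
    (fun v => [gridPt x 0, numTerm 0].getD v (.const 0))
    (by simpa [yZeroRule, substAtom] using ⟨yCoord_mem_chase_grid x 0, zero_mem_chase_grid⟩)

theorem chase_Dgrid_Rgrid_eq_gridChase : 𝒞 = gridChase := by
  refine Set.Subset.antisymm (chase_subset_of_chaseStep_subset ?_ ?_) ?_
  · rintro α ⟨a, ha, rfl⟩
    simp only [Dgrid, List.mem_cons, List.not_mem_nil, or_false] at ha
    rcases ha with rfl | rfl
    · exact succ_mem_gridChase_iff.mpr ⟨0, rfl, rfl⟩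
    · exact zero_mem_gridChase_iff.mpr rfl
  · rintro α (hα | ⟨ρ, hρ, h, hb, rfl⟩)
    exacts [hα, skolemAtom_mem_gridChase hρ hb]
  · rintro α (⟨n, rfl⟩ | rfl | ⟨x, y, rfl⟩ | ⟨x, y, rfl⟩ | ⟨x, y, rfl⟩ | ⟨x, y, rfl⟩ |
      ⟨x, y, rfl⟩ | ⟨x, y, rfl⟩ | ⟨x, y, rfl⟩ | ⟨y, rfl⟩ | ⟨x, rfl⟩)
    exacts [succ_mem_chase_grid n, zero_mem_chase_grid, gridPoint_mem_chase_grid x y,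
      xCoord_mem_chase_grid x y, yCoord_mem_chase_grid x y, incX_mem_chase_grid x y,
      incY_mem_chase_grid x y, decX_mem_chase_grid x y, decY_mem_chase_grid x y,
      xZero_mem_chase_grid y, yZero_mem_chase_grid x]

end ChaseOfGrid

lemma gridPt_mem_adom (x y : ℕ) : gridPt x y ∈ adom gridChase :=
  ⟨_, incX_mem_gridChase_iff.mpr ⟨x, y, rfl, rfl⟩, List.mem_cons_self⟩

lemma IPath_xZero_yZero_iff {s t : GTerm} {w : List ℕ} :
    IPath gridChase s (pXZero :: pYZero :: w) t ↔
      s = gridPt 0 0 ∧ IPath gridChase (gridPt 0 0) w t := by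
  constructor
  · rintro (_ | ⟨hx, _ | ⟨hy, hw⟩⟩)
    obtain ⟨y, rfl, rfl⟩ := xZero_mem_gridChase_iff.mp hx
    obtain ⟨x, hxy, rfl⟩ := yZero_mem_gridChase_iff.mp hy
    obtain ⟨rfl, rfl⟩ := gridPt_inj.mp hxy
    exact ⟨rfl, hw⟩
  · rintro ⟨rfl, hw⟩
    exact .cons (xZero_mem_gridChase_iff.mpr ⟨0, rfl, rfl⟩)
      (.cons (yZero_mem_gridChase_iff.mpr ⟨0, rfl, rfl⟩) hw)

lemma mem_matches'_char_mul_char_mul {α : Type*} {a b : α} {A : RegularExpression α}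
    {w : List α} :
    w ∈ (RegularExpression.char a * RegularExpression.char b * A).matches' ↔
      ∃ w' ∈ A.matches', w = a :: b :: w' := by
  have mem_singleton (u : List α) (c : α) : u ∈ ({[c]} : Language α) ↔ u = [c] := Iff.rfl
  simp [Language.mem_mul, mem_singleton, eq_comm]

lemma sZero_ne_sDecr (b : Bool) : sZero b ≠ sDecr b := by
  cases b <;> simp [sZero, sDecr, pXZero, pYZero, pDecX, pDecY]

namespace TCA

variable (M : TCA)

def counter (c : M.State × ℕ × ℕ) : ℕ := if M.cX c.1 then c.2.1 else c.2.2

def thenWord (q : M.State) : List ℕ := [sZero (M.cX q), sZero (M.cX q), sIncr (M.cX q)]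

def elseWord (q : M.State) : List ℕ :=
  [sDecr (M.cX q), sIncr (M.cX q), if M.dPlus q then sIncr (M.cX q) else sDecr (M.cX q)]

def branchWords (q : M.State) : Set (List ℕ) := {M.thenWord q, M.elseWord q}

def instrWord (c : M.State × ℕ × ℕ) : List ℕ :=
  if M.counter c = 0 then M.thenWord c.1 else M.elseWord c.1

lemma length_of_mem_branchWords {q : M.State} {v : List ℕ} (hv : v ∈ M.branchWords q) :
    v.length = 3 := by
  rcases hv with rfl | rfl <;> rfl

lemma tcaDFA_step : (tcaDFA M).step = M.delta := rfl

lemma mem_accepts_tcaDFA {w : List ℕ} :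
    w ∈ (tcaDFA M).accepts ↔ (tcaDFA M).evalFrom (some (.inl M.q0)) w = some (.inl M.qhalt) :=
  Iff.rfl

lemma evalFrom_none (w : List ℕ) : (tcaDFA M).evalFrom none w = none := by
  induction w with
  | nil => rfl
  | cons _ _ ih => exact ih

lemma evalFrom_instrWord (c : M.State × ℕ × ℕ) :
    (tcaDFA M).evalFrom (some (.inl c.1)) (M.instrWord c) = some (.inl (M.step c).1) := by
  obtain ⟨q, x, y⟩ := c
  cases hb : M.cX q <;> by_cases hz : M.counter (q, x, y) = 0 <;>
    simp_all [instrWord, thenWord, elseWord, counter, step, tcaDFA, delta,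
      (sZero_ne_sDecr _).symm]

lemma delta_delta_delta_inl (q : M.State) (a b c : ℕ) :
    M.delta (M.delta (M.delta (some (.inl q)) a) b) c =
      if [a, b, c] = M.thenWord q then some (.inl (M.qt q))
      else if [a, b, c] = M.elseWord q then some (.inl (M.qf q)) else none := by
  simp only [thenWord, elseWord, List.cons.injEq, and_true]
  have := sZero_ne_sDecr (M.cX q)
  grind [delta]

lemma eq_nil_or_exists_branchWords_append {q q' : M.State} {w : List ℕ}
    (h : (tcaDFA M).evalFrom (some (.inl q)) w = some (.inl q')) :
    w = [] ∨ ∃ v ∈ M.branchWords q, ∃ w', w = v ++ w' := by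
  rcases w with _ | ⟨a, _ | ⟨b, _ | ⟨c, w⟩⟩⟩
  · exact .inl rfl
  · simp only [DFA.evalFrom_cons, DFA.evalFrom_nil, tcaDFA_step] at h
    grind [delta]
  · simp only [DFA.evalFrom_cons, DFA.evalFrom_nil, tcaDFA_step] at h
    grind [delta]
  · simp only [DFA.evalFrom_cons, tcaDFA_step, delta_delta_delta_inl] at h
    split_ifs at h with hthen helse
    · exact .inr ⟨_, .inl rfl, w, by rw [← hthen]; rfl⟩
    · exact .inr ⟨_, .inr rfl, w, by rw [← helse]; rfl⟩
    · simp [evalFrom_none] at h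

lemma IPath_instrWord (c : M.State × ℕ × ℕ) :
    IPath gridChase (gridPt c.2.1 c.2.2) (M.instrWord c)
      (gridPt (M.step c).2.1 (M.step c).2.2) := by
  obtain ⟨q, x, y⟩ := c
  cases hb : M.cX q <;> cases hd : M.dPlus q <;> rcases x with _ | x <;> rcases y with _ | y <;>
    simp [instrWord, thenWord, elseWord, counter, step, hb, hd, sZero, sIncr, sDecr] <;>
    apply IPath.cons ?_ (IPath.cons ?_ (IPath.cons ?_ (IPath.nil _)))
  all_goals try first
    | exact xZero_mem_gridChase_iff.mpr ⟨_, rfl, rfl⟩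
    | exact yZero_mem_gridChase_iff.mpr ⟨_, rfl, rfl⟩
    | exact incX_mem_gridChase_iff.mpr ⟨_, _, rfl, rfl⟩
    | exact incY_mem_gridChase_iff.mpr ⟨_, _, rfl, rfl⟩
    | exact decX_mem_gridChase_iff.mpr ⟨_, _, rfl, rfl⟩
    | exact decY_mem_gridChase_iff.mpr ⟨_, _, rfl, rfl⟩

variable {M}

lemma counter_eq_zero_of_sZero_mem {c : M.State × ℕ × ℕ} {t : GTerm}
    (h : (⟨sZero (M.cX c.1), [gridPt c.2.1 c.2.2, t]⟩ : GAtom) ∈ gridChase) :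
    M.counter c = 0 := by
  obtain ⟨q, x, y⟩ := c
  cases hb : M.cX q <;> simp only [hb, sZero, counter] at h ⊢
  · obtain ⟨x', h1, -⟩ := yZero_mem_gridChase_iff.mp h
    exact (gridPt_inj.mp h1).2
  · obtain ⟨y', h1, -⟩ := xZero_mem_gridChase_iff.mp h
    exact (gridPt_inj.mp h1).1

lemma counter_ne_zero_of_sDecr_mem {c : M.State × ℕ × ℕ} {t : GTerm}
    (h : (⟨sDecr (M.cX c.1), [gridPt c.2.1 c.2.2, t]⟩ : GAtom) ∈ gridChase) :
    M.counter c ≠ 0 := by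
  obtain ⟨q, x, y⟩ := c
  cases hb : M.cX q <;> simp only [hb, sDecr, counter] at h ⊢
  · obtain ⟨x', y', h1, -⟩ := decY_mem_gridChase_iff.mp h
    simp [(gridPt_inj.mp h1).2]
  · obtain ⟨x', y', h1, -⟩ := decX_mem_gridChase_iff.mp h
    simp [(gridPt_inj.mp h1).1]

lemma eq_instrWord_of_IPath {c : M.State × ℕ × ℕ} {v : List ℕ} {t : GTerm}
    (hv : v ∈ M.branchWords c.1) (h : IPath gridChase (gridPt c.2.1 c.2.2) v t) :
    v = M.instrWord c := by
  rcases hv with rfl | rfl <;> obtain _ | ⟨he, -⟩ := h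
  · rw [instrWord, if_pos (counter_eq_zero_of_sZero_mem he)]
  · rw [instrWord, if_neg (counter_ne_zero_of_sDecr_mem he)]

lemma IPath_step_of_IPath_append {c : M.State × ℕ × ℕ} {v w : List ℕ} {t : GTerm}
    (hv : v ∈ M.branchWords c.1) (h : IPath gridChase (gridPt c.2.1 c.2.2) (v ++ w) t) :
    v = M.instrWord c ∧ IPath gridChase (gridPt (M.step c).2.1 (M.step c).2.2) w t := by
  obtain ⟨s, hv', hw⟩ := h.of_append
  obtain rfl := eq_instrWord_of_IPath hv hv'
  obtain rfl := IPath.eq_of_functional gridChase_functional hv' (M.IPath_instrWord c)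
  exact ⟨rfl, hw⟩

theorem exists_iterate_eq_qhalt_of_IPath {c : M.State × ℕ × ℕ} {w : List ℕ} {t : GTerm}
    (hpath : IPath gridChase (gridPt c.2.1 c.2.2) w t)
    (hw : (tcaDFA M).evalFrom (some (.inl c.1)) w = some (.inl M.qhalt)) :
    ∃ k, ((M.step)^[k] c).1 = M.qhalt := by
  induction hn : w.length using Nat.strong_induction_on generalizing c w with
  | _ n ih =>
    rcases M.eq_nil_or_exists_branchWords_append hw with rfl | ⟨v, hv, w', rfl⟩
    · exact ⟨0, by simpa using hw⟩
    obtain ⟨rfl, hpath'⟩ := IPath_step_of_IPath_append hv hpath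
    rw [DFA.evalFrom_of_append, evalFrom_instrWord] at hw
    obtain ⟨k, hk⟩ :=
      ih w'.length (by simp [← hn, M.length_of_mem_branchWords hv]) hpath' hw rfl
    exact ⟨k + 1, hk⟩

theorem exists_IPath_iterate (k : ℕ) (c : M.State × ℕ × ℕ) :
    ∃ w, IPath gridChase (gridPt c.2.1 c.2.2) w
        (gridPt ((M.step)^[k] c).2.1 ((M.step)^[k] c).2.2) ∧
      (tcaDFA M).evalFrom (some (.inl c.1)) w = some (.inl ((M.step)^[k] c).1) := by
  induction k generalizing c with
  | zero => exact ⟨[], .nil _, rfl⟩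
  | succ k ih =>
    obtain ⟨w, hpath, hw⟩ := ih (M.step c)
    refine ⟨M.instrWord c ++ w, (M.IPath_instrWord c).append hpath, ?_⟩
    rw [DFA.evalFrom_of_append, evalFrom_instrWord, hw, Function.iterate_succ_apply]

end TCA

/-- For every two-counter automaton `M`:
`chase(D_grid, R_grid) ⊨ Q_M` iff `M` halts from the configuration `(q0,0,0)`,
where `Q_M = ∃x,y (XZero · YZero · A)(x,y)` and `A` is any regular expression
with the same language as the DFA `A_M`. -/
theorem chase_grid_entails_QM_iff_halts (M : TCA) (A : RegularExpression ℕ)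
    (hA : A.matches' = (tcaDFA M).accepts) :
    satRPQ (chase (dbInst Dgrid) (rsSet Rgrid))
      (RegularExpression.char pXZero * RegularExpression.char pYZero * A) ↔
    M.Halts := by
  unfold satRPQ satLang
  rw [chase_Dgrid_Rgrid_eq_gridChase]
  constructor
  · rintro ⟨s, t, w', -, -, hpath, hw'⟩
    obtain ⟨w, hw, rfl⟩ := mem_matches'_char_mul_char_mul.mp hw'
    rw [hA, M.mem_accepts_tcaDFA] at hw
    exact TCA.exists_iterate_eq_qhalt_of_IPath (IPath_xZero_yZero_iff.mp hpath).2 hw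
  · rintro ⟨k, hk⟩
    obtain ⟨w, hpath, hw⟩ := M.exists_IPath_iterate k (M.q0, 0, 0)
    refine ⟨_, _, pXZero :: pYZero :: w, gridPt_mem_adom 0 0, gridPt_mem_adom _ _,
      IPath_xZero_yZero_iff.mpr ⟨rfl, hpath⟩, mem_matches'_char_mul_char_mul.mpr ⟨w, ?_, rfl⟩⟩
    rw [hA, M.mem_accepts_tcaDFA, hw, hk]
end
end

section
/- Let I be an instance with terms s and t, and let ρ be a joinless existential rule. If I satisfies ρ then I[s,t ↦ u] satisfies ρ. -/
set_option maxHeartbeats 1000000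

noncomputable section

open Classical

/-! In a joinless rule every body variable occurs at exactly one body position. Hence a match
of the body in the image of `I` under a term map `f` lifts, position by position, to a match in
`I` whose image under `f` is the given one; the rule then yields a head match in `I`, and its
image under `f` is a head match in the image of `I`. Merging `s` and `t` is such a term map. -/

theorem List.exists_map_eq_of_nodup {α γ : Type*} [Nonempty γ] :
    ∀ {l : List α}, l.Nodup → ∀ {ts : List γ}, ts.length = l.length → ∃ g : α → γ, l.map g = ts
  | [], _, [], _ => ⟨fun _ => Classical.arbitrary γ, rfl⟩
  | x :: l, hl, t :: ts, hlen => by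
    obtain ⟨hx, hl⟩ := List.nodup_cons.1 hl
    obtain ⟨g, hg⟩ := List.exists_map_eq_of_nodup hl (Nat.succ.inj hlen)
    refine ⟨Function.update g x t, ?_⟩
    rw [List.map_cons, Function.update_self,
      List.map_congr_left fun y hy => Function.update_of_ne (ne_of_mem_of_not_mem hy hx) t g, hg]

theorem List.exists_forall_map_eq_of_nodup_flatMap {ι α γ : Type*} [Nonempty γ] (p : ι → List α)
    (ts : ι → List γ) :
    ∀ {is : List ι}, (is.flatMap p).Nodup → (∀ i ∈ is, (ts i).length = (p i).length) →
      ∃ g : α → γ, ∀ i ∈ is, (p i).map g = ts i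
  | [], _, _ => ⟨fun _ => Classical.arbitrary γ, by simp⟩
  | i :: is, hnd, hlen => by
    rw [List.flatMap_cons, List.nodup_append] at hnd
    obtain ⟨hi, his, hdisj⟩ := hnd
    obtain ⟨g₁, hg₁⟩ := List.exists_map_eq_of_nodup hi (hlen i List.mem_cons_self)
    obtain ⟨g₂, hg₂⟩ := List.exists_forall_map_eq_of_nodup_flatMap p ts his
      fun j hj => hlen j (List.mem_cons_of_mem i hj)
    refine ⟨fun a => if a ∈ p i then g₁ a else g₂ a, ?_⟩
    rintro j (_ | ⟨_, hj⟩)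
    · rw [← hg₁]
      exact List.map_congr_left fun a ha => if_pos ha
    · rw [← hg₂ j hj]
      refine List.map_congr_left fun a ha => if_neg fun hai => ?_
      exact hdisj a hai a (List.mem_flatMap.2 ⟨j, hj, ha⟩) rfl

instance : Inhabited GTerm := ⟨GTerm.const 0⟩

instance : Inhabited GAtom := ⟨⟨0, []⟩⟩

theorem bodyVarList_eq_flatMap (ρ : ERule) : bodyVarList ρ = ρ.1.flatMap Prod.snd := by
  simp [bodyVarList, List.flatMap]

theorem bodyVarList_nodup_of_joinless {ρ : ERule} (hjoinless : ∀ v, ¬ isJoinVar ρ v) :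
    (bodyVarList ρ).Nodup :=
  List.nodup_iff_count_le_one.2 fun v => not_lt.1 (hjoinless v)

def GAtom.map (f : GTerm → GTerm) (α : GAtom) : GAtom := ⟨α.pred, α.args.map f⟩

theorem GAtom.map_substAtom (f : GTerm → GTerm) (h : ℕ → GTerm) (a : PAtom) :
    (substAtom h a).map f = substAtom (f ∘ h) a := by
  simp [GAtom.map, substAtom]

theorem mergeInst_eq_image (I : Inst) (s t u : GTerm) :
    mergeInst I s t u = GAtom.map (mergeMap s t u) '' I := rfl

theorem satRule_image_map_of_joinless {I : Inst} {ρ : ERule} (f : GTerm → GTerm)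
    (hjoinless : ∀ v, ¬ isJoinVar ρ v) (hsat : satRule I ρ) :
    satRule (GAtom.map f '' I) ρ := by
  intro h hbody
  choose! F hFI hFh using hbody
  have hlen : ∀ a ∈ ρ.1, (F a).args.length = a.2.length := fun a ha => by
    simpa [GAtom.map, substAtom] using congrArg (·.args.length) (hFh a ha)
  obtain ⟨h', hh'⟩ := List.exists_forall_map_eq_of_nodup_flatMap Prod.snd (fun a => (F a).args)
    (bodyVarList_eq_flatMap ρ ▸ bodyVarList_nodup_of_joinless hjoinless) hlen
  have hsubst : ∀ a ∈ ρ.1, substAtom h' a = F a := fun a ha => by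
    rw [substAtom, hh' a ha]
    exact congrArg (GAtom.mk · _) (congrArg GAtom.pred (hFh a ha)).symm
  obtain ⟨g, hg, hgI⟩ := hsat h' fun a ha => hsubst a ha ▸ hFI a ha
  have hmatch : ∀ v ∈ bodyVarList ρ, f (h' v) = h v := by
    intro v hv
    obtain ⟨a, ha, hva⟩ := List.mem_flatMap.1 (bodyVarList_eq_flatMap ρ ▸ hv)
    have : substAtom (f ∘ h') a = substAtom h a := by
      rw [← GAtom.map_substAtom, hsubst a ha, hFh a ha]
    exact List.map_inj_left.1 (congrArg GAtom.args this) v hva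
  exact ⟨f ∘ g, fun v hv => by rw [Function.comp, hg v hv, hmatch v hv], _, hgI,
    GAtom.map_substAtom f g ρ.2⟩

theorem joinless_rule_preserved_by_merge_general (I : Inst) (s t : GTerm)
    (n : ℕ)
    (ρ : ERule) (hjoinless : ∀ v, ¬ isJoinVar ρ v)
    (hsat : satRule I ρ) :
    satRule (mergeInst I s t (GTerm.null n)) ρ :=
  mergeInst_eq_image I s t _ ▸ satRule_image_map_of_joinless _ hjoinless hsat

/-- Let `I` be an instance with terms `s` and `t` and let `ρ`
be a joinless rule. If `I ⊨ ρ` then `I[s,t ↦ u] ⊨ ρ` (for a fresh null `u`). -/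
theorem joinless_rule_preserved_by_merge (I : Inst) (s t : GTerm)
    (hs : s ∈ adom I) (ht : t ∈ adom I)
    (n : ℕ) (hfresh : GTerm.null n ∉ adom I)
    (ρ : ERule) (hjoinless : ∀ v, ¬ isJoinVar ρ v)
    (hsat : satRule I ρ) :
    satRule (mergeInst I s t (GTerm.null n)) ρ :=
  joinless_rule_preserved_by_merge_general I s t n ρ hjoinless hsat
end
end

section
/- Let Q be a Boolean RPQ and A a DFA defining its regular language. Let I be an instance and t, t' two of its terms with equal regular types, ↑_A(t) = ↑_A(t'). Then I ⊨ Q if and only if I[t,t' ↦ t''] ⊨ Q. -/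
set_option maxHeartbeats 1000000

noncomputable section

open Classical

/-! Merging `t` and `t'` is a homomorphism, so every path survives. Conversely, a path of the
merged instance that passes through the new null enters it as (say) `t` and leaves it as `t'`;
since `t` and `t'` have the same regular type, the rest of the path can be replaced by one
starting at `t` that drives the automaton into the same state. By induction along the path, each
term of the merged instance has the regular type of each of its preimages, and whether an RPQ
holds depends only on the regular types of active terms. -/

theorem IPath.mem_adom {I : Inst} {s e : GTerm} {w : List ℕ} (hp : IPath I s w e)
    (hs : s ∈ adom I) : e ∈ adom I := by
  induction hp with
  | nil => exact hs
  | cons hedge _ ih => exact ih ⟨_, hedge, by simp⟩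

theorem mem_regType_nil {σ : Type} (I : Inst) (dfa : DFA ℕ σ) (x : GTerm) (q : σ) :
    (q, q) ∈ regType I dfa x :=
  ⟨[], x, IPath.nil x, rfl⟩

theorem mem_regType_of_edge {σ : Type} {I : Inst} {dfa : DFA ℕ σ} {a b : GTerm} {p : ℕ}
    {q q' : σ} (hedge : (⟨p, [a, b]⟩ : GAtom) ∈ I) (hb : (dfa.step q p, q') ∈ regType I dfa b) :
    (q, q') ∈ regType I dfa a := by
  obtain ⟨w, e, hp, hw⟩ := hb
  exact ⟨p :: w, e, IPath.cons hedge hp, hw⟩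

theorem satLang_accepts_iff {σ : Type} (I : Inst) (dfa : DFA ℕ σ) :
    satLang I dfa.accepts ↔ ∃ s ∈ adom I, ∃ q ∈ dfa.accept, (dfa.start, q) ∈ regType I dfa s := by
  constructor
  · rintro ⟨s, e, w, hs, -, hp, hw⟩
    exact ⟨s, hs, _, hw, w, e, hp, rfl⟩
  · rintro ⟨s, hs, q, hq, w, e, hp, hw : dfa.evalFrom dfa.start w = q⟩
    subst hw
    exact ⟨s, e, w, hs, hp.mem_adom hs, hp, hq⟩

/-- `mergeInst I s t u` is, by definition, `mapInst (mergeMap s t u) I`. -/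
def mapInst (f : GTerm → GTerm) (I : Inst) : Inst :=
  (fun α => GAtom.mk α.pred (α.args.map f)) '' I

theorem adom_mapInst (f : GTerm → GTerm) (I : Inst) : adom (mapInst f I) = f '' adom I := by
  ext x
  constructor
  · rintro ⟨_, ⟨α, hα, rfl⟩, hx⟩
    obtain ⟨y, hy, rfl⟩ := List.mem_map.mp hx
    exact ⟨y, ⟨α, hα, hy⟩, rfl⟩
  · rintro ⟨y, ⟨α, hα, hy⟩, rfl⟩
    exact ⟨_, ⟨α, hα, rfl⟩, List.mem_map_of_mem hy⟩

theorem IPath.map {I : Inst} {s e : GTerm} {w : List ℕ} (f : GTerm → GTerm)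
    (hp : IPath I s w e) : IPath (mapInst f I) (f s) w (f e) := by
  induction hp with
  | nil => exact IPath.nil _
  | cons hedge _ ih => exact IPath.cons ⟨_, hedge, rfl⟩ ih

theorem exists_edge_of_mem_mapInst {f : GTerm → GTerm} {I : Inst} {s m : GTerm} {p : ℕ}
    (hedge : (⟨p, [s, m]⟩ : GAtom) ∈ mapInst f I) :
    ∃ a b, (⟨p, [a, b]⟩ : GAtom) ∈ I ∧ f a = s ∧ f b = m := by
  obtain ⟨⟨p', args⟩, hβ, heq⟩ := hedge
  simp only [GAtom.mk.injEq] at heq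
  obtain ⟨rfl, hargs⟩ := heq
  obtain ⟨a, b, rfl, hfa, hfb⟩ : ∃ a b, args = [a, b] ∧ f a = s ∧ f b = m := by
    match args, hargs with
    | [a, b], h => simpa using h
  exact ⟨a, b, hβ, hfa, hfb⟩

section FiberwiseRegType

variable {σ : Type} {I : Inst} {dfa : DFA ℕ σ} {f : GTerm → GTerm}

theorem IPath.mem_regType_of_mapInst
    (hfib : ∀ x ∈ adom I, ∀ y ∈ adom I, f x = f y → regType I dfa x = regType I dfa y)
    {s e : GTerm} {w : List ℕ} (hp : IPath (mapInst f I) s w e) :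
    ∀ s' ∈ adom I, f s' = s → ∀ q, (q, dfa.evalFrom q w) ∈ regType I dfa s' := by
  induction hp with
  | nil => exact fun s' _ _ q => mem_regType_nil I dfa s' q
  | cons hedge _ ih =>
    intro s' hs' hfs' q
    obtain ⟨a, b, hab, hfa, hfb⟩ := exists_edge_of_mem_mapInst hedge
    have ha : a ∈ adom I := ⟨_, hab, by simp⟩
    have hb : b ∈ adom I := ⟨_, hab, by simp⟩
    rw [hfib s' hs' a ha (hfs'.trans hfa.symm)]
    exact mem_regType_of_edge hab (ih b hb hfb _)

theorem regType_mapInst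
    (hfib : ∀ x ∈ adom I, ∀ y ∈ adom I, f x = f y → regType I dfa x = regType I dfa y)
    {x : GTerm} (hx : x ∈ adom I) : regType (mapInst f I) dfa (f x) = regType I dfa x := by
  ext ⟨q, q'⟩
  constructor
  · rintro ⟨w, e, hp, hw : dfa.evalFrom q w = q'⟩
    subst hw
    exact IPath.mem_regType_of_mapInst hfib hp x hx rfl q
  · rintro ⟨w, e, hp, hw⟩
    exact ⟨w, f e, hp.map f, hw⟩

theorem satLang_mapInst_accepts_iff
    (hfib : ∀ x ∈ adom I, ∀ y ∈ adom I, f x = f y → regType I dfa x = regType I dfa y) :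
    satLang (mapInst f I) dfa.accepts ↔ satLang I dfa.accepts := by
  simp only [satLang_accepts_iff, adom_mapInst, Set.exists_mem_image]
  refine exists_congr fun x => and_congr_right fun hx => ?_
  rw [regType_mapInst hfib hx]

end FiberwiseRegType

theorem regType_eq_of_mergeMap_eq {σ : Type} {I : Inst} {dfa : DFA ℕ σ} {t t' u : GTerm}
    (hu : u ∉ adom I) (hreg : regType I dfa t = regType I dfa t') :
    ∀ x ∈ adom I, ∀ y ∈ adom I, mergeMap t t' u x = mergeMap t t' u y →
      regType I dfa x = regType I dfa y := by
  intro x hx y hy hxy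
  have hxu : x ≠ u := fun h => hu (h ▸ hx)
  have hyu : y ≠ u := fun h => hu (h ▸ hy)
  unfold mergeMap at hxy
  split_ifs at hxy with hxm hym hym
  · rcases hxm with rfl | rfl <;> rcases hym with rfl | rfl <;> simp [hreg]
  · exact absurd hxy.symm hyu
  · exact absurd hxy hxu
  · rw [hxy]

theorem merge_equal_regular_types_preserves_rpq_general {σ : Type}
    (A : RegularExpression ℕ) (dfa : DFA ℕ σ)
    (hdfa : dfa.accepts = A.matches')
    (I : Inst) (t t' : GTerm)
    (n : ℕ) (hfresh : GTerm.null n ∉ adom I)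
    (hreg : regType I dfa t = regType I dfa t') :
    satRPQ I A ↔ satRPQ (mergeInst I t t' (GTerm.null n)) A := by
  rw [satRPQ, satRPQ, ← hdfa]
  exact (satLang_mapInst_accepts_iff (regType_eq_of_mergeMap_eq hfresh hreg)).symm

/-- Let `Q` be a Boolean RPQ and `dfa` a DFA defining its
regular language. If two terms `t`, `t'` of an instance `I` have equal regular
types `↑_A(t) = ↑_A(t')`, then `I ⊨ Q` iff `I[t,t' ↦ t''] ⊨ Q`. -/
theorem merge_equal_regular_types_preserves_rpq {σ : Type}
    (A : RegularExpression ℕ) (dfa : DFA ℕ σ)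
    (hdfa : dfa.accepts = A.matches')
    (I : Inst) (t t' : GTerm) (ht : t ∈ adom I) (ht' : t' ∈ adom I)
    (n : ℕ) (hfresh : GTerm.null n ∉ adom I)
    (hreg : regType I dfa t = regType I dfa t') :
    satRPQ I A ↔ satRPQ (mergeInst I t t' (GTerm.null n)) A :=
  merge_equal_regular_types_preserves_rpq_general A dfa hdfa I t t' n hfresh hreg
end
end
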